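/- The second quandle cohomology group of the dihedral quandle R_4 with integer coefficients is free abelian of rank two: H²_Q(R_4; Z) ≅ Z × Z, generated by the classes of f_{(0,1)} = χ_{(0,1)} + χ_{(0,3)} and f_{(1,0)} = χ_{(1,0)} + χ_{(1,2)}. -/
import Mathlib


/-- The dihedral quandle `R₄` operation on `ZMod 4`: `i * j = 2j − i`. -/
def r4op (i j : ZMod 4) : ZMod 4 := 2 * j - i

/-- The characteristic function `χ_{(a,b)}` on `R₄²`. -/
def chi2 (a b x y : ZMod 4) : ℤ := if x = a ∧ y = b then 1 else 0

/-- `f_{(0,1)} = χ_{(0,1)} + χ_{(0,3)}`. -/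
def f01 (x y : ZMod 4) : ℤ := chi2 0 1 x y + chi2 0 3 x y

/-- `f_{(1,0)} = χ_{(1,0)} + χ_{(1,2)}`. -/
def f10 (x y : ZMod 4) : ℤ := chi2 1 0 x y + chi2 1 2 x y

/-- `H²_Q(R₄; ℤ) ≅ ℤ × ℤ`, freely generated by the classes of
`f_{(0,1)} = χ_{(0,1)} + χ_{(0,3)}` and `f_{(1,0)} = χ_{(1,0)} + χ_{(1,2)}`:
every quandle 2-cocycle is cohomologous to a unique integral combination
`a·f_{(0,1)} + b·f_{(1,0)}`. -/
theorem H2_R4_free_rank_two :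
    (∀ f : ZMod 4 → ZMod 4 → ℤ,
      (∀ p, f p p = 0) →
      (∀ p q r,
        f p r + f (r4op p r) (r4op q r) = f p q + f (r4op p q) r) →
      ∃ a b : ℤ, ∃ g : ZMod 4 → ℤ,
        ∀ x y, f x y = a * f01 x y + b * f10 x y + (g x - g (r4op x y))) ∧
    (∀ a b : ℤ,
      (∃ g : ZMod 4 → ℤ,
        ∀ x y, a * f01 x y + b * f10 x y = g x - g (r4op x y)) →
      a = 0 ∧ b = 0) := by
  constructor
  · intro f hd hc
    have i0 : f 0 1 + f 2 2 = f 0 0 + f 0 1 := hc 0 0 1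
    have i1 : f 0 0 + f 0 3 = f 0 1 + f 2 0 := hc 0 1 0
    have i2 : f 0 2 + f 0 3 = f 0 1 + f 2 2 := hc 0 1 2
    have i3 : f 0 3 + f 2 1 = f 0 1 + f 2 3 := hc 0 1 3
    have i4 : f 0 1 + f 2 0 = f 0 2 + f 0 1 := hc 0 2 1
    have i5 : f 0 0 + f 0 1 = f 0 3 + f 2 0 := hc 0 3 0
    have i6 : f 0 2 + f 0 1 = f 0 3 + f 2 2 := hc 0 3 2
    have i7 : f 1 1 + f 1 2 = f 1 0 + f 3 1 := hc 1 0 1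
    have i8 : f 1 2 + f 3 0 = f 1 0 + f 3 2 := hc 1 0 2
    have i9 : f 1 3 + f 1 2 = f 1 0 + f 3 3 := hc 1 0 3
    have i10 : f 1 0 + f 3 3 = f 1 1 + f 1 0 := hc 1 1 0
    have i11 : f 1 1 + f 1 0 = f 1 2 + f 3 1 := hc 1 2 1
    have i12 : f 1 3 + f 1 0 = f 1 2 + f 3 3 := hc 1 2 3
    have i13 : f 1 0 + f 3 1 = f 1 3 + f 1 0 := hc 1 3 0
    have i14 : f 2 0 + f 2 3 = f 2 1 + f 0 0 := hc 2 1 0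
    have i15 : f 2 2 + f 2 3 = f 2 1 + f 0 2 := hc 2 1 2
    have i16 : f 2 0 + f 2 1 = f 2 3 + f 0 0 := hc 2 3 0
    have i17 : f 2 2 + f 2 1 = f 2 3 + f 0 2 := hc 2 3 2
    have i18 : f 3 1 + f 3 2 = f 3 0 + f 1 1 := hc 3 0 1
    have i19 : f 3 3 + f 3 2 = f 3 0 + f 1 3 := hc 3 0 3
    have i20 : f 3 1 + f 3 0 = f 3 2 + f 1 1 := hc 3 2 1
    have i21 : f 3 3 + f 3 0 = f 3 2 + f 1 3 := hc 3 2 3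
    have hd0 := hd 0
    have hd1 := hd 1
    have hd2 := hd 2
    have hd3 := hd 3
    have e00 : f 0 0 = (f 0 1 + f 2 1) * f01 0 0 + (f 1 0 + f 3 0) * f10 0 0 + ((if (0:ZMod 4) = 0 then -(f 2 1) else if (0:ZMod 4) = 1 then -(f 3 0) else 0) - (if (0:ZMod 4) = 0 then -(f 2 1) else if (0:ZMod 4) = 1 then -(f 3 0) else 0)) := by
      simp only [f01, f10, chi2]
      simp +decide
      try omega
    have e01 : f 0 1 = (f 0 1 + f 2 1) * f01 0 1 + (f 1 0 + f 3 0) * f10 0 1 + ((if (0:ZMod 4) = 0 then -(f 2 1) else if (0:ZMod 4) = 1 then -(f 3 0) else 0) - (if (2:ZMod 4) = 0 then -(f 2 1) else if (2:ZMod 4) = 1 then -(f 3 0) else 0)) := by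
      simp only [f01, f10, chi2]
      simp +decide
      try omega
    have e02 : f 0 2 = (f 0 1 + f 2 1) * f01 0 2 + (f 1 0 + f 3 0) * f10 0 2 + ((if (0:ZMod 4) = 0 then -(f 2 1) else if (0:ZMod 4) = 1 then -(f 3 0) else 0) - (if (0:ZMod 4) = 0 then -(f 2 1) else if (0:ZMod 4) = 1 then -(f 3 0) else 0)) := by
      simp only [f01, f10, chi2]
      simp +decide
      try omega
    have e03 : f 0 3 = (f 0 1 + f 2 1) * f01 0 3 + (f 1 0 + f 3 0) * f10 0 3 + ((if (0:ZMod 4) = 0 then -(f 2 1) else if (0:ZMod 4) = 1 then -(f 3 0) else 0) - (if (2:ZMod 4) = 0 then -(f 2 1) else if (2:ZMod 4) = 1 then -(f 3 0) else 0)) := by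
      simp only [f01, f10, chi2]
      simp +decide
      try omega
    have e10 : f 1 0 = (f 0 1 + f 2 1) * f01 1 0 + (f 1 0 + f 3 0) * f10 1 0 + ((if (1:ZMod 4) = 0 then -(f 2 1) else if (1:ZMod 4) = 1 then -(f 3 0) else 0) - (if (3:ZMod 4) = 0 then -(f 2 1) else if (3:ZMod 4) = 1 then -(f 3 0) else 0)) := by
      simp only [f01, f10, chi2]
      simp +decide
      try omega
    have e11 : f 1 1 = (f 0 1 + f 2 1) * f01 1 1 + (f 1 0 + f 3 0) * f10 1 1 + ((if (1:ZMod 4) = 0 then -(f 2 1) else if (1:ZMod 4) = 1 then -(f 3 0) else 0) - (if (1:ZMod 4) = 0 then -(f 2 1) else if (1:ZMod 4) = 1 then -(f 3 0) else 0)) := by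
      simp only [f01, f10, chi2]
      simp +decide
      try omega
    have e12 : f 1 2 = (f 0 1 + f 2 1) * f01 1 2 + (f 1 0 + f 3 0) * f10 1 2 + ((if (1:ZMod 4) = 0 then -(f 2 1) else if (1:ZMod 4) = 1 then -(f 3 0) else 0) - (if (3:ZMod 4) = 0 then -(f 2 1) else if (3:ZMod 4) = 1 then -(f 3 0) else 0)) := by
      simp only [f01, f10, chi2]
      simp +decide
      try omega
    have e13 : f 1 3 = (f 0 1 + f 2 1) * f01 1 3 + (f 1 0 + f 3 0) * f10 1 3 + ((if (1:ZMod 4) = 0 then -(f 2 1) else if (1:ZMod 4) = 1 then -(f 3 0) else 0) - (if (1:ZMod 4) = 0 then -(f 2 1) else if (1:ZMod 4) = 1 then -(f 3 0) else 0)) := by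
      simp only [f01, f10, chi2]
      simp +decide
      try omega
    have e20 : f 2 0 = (f 0 1 + f 2 1) * f01 2 0 + (f 1 0 + f 3 0) * f10 2 0 + ((if (2:ZMod 4) = 0 then -(f 2 1) else if (2:ZMod 4) = 1 then -(f 3 0) else 0) - (if (2:ZMod 4) = 0 then -(f 2 1) else if (2:ZMod 4) = 1 then -(f 3 0) else 0)) := by
      simp only [f01, f10, chi2]
      simp +decide
      try omega
    have e21 : f 2 1 = (f 0 1 + f 2 1) * f01 2 1 + (f 1 0 + f 3 0) * f10 2 1 + ((if (2:ZMod 4) = 0 then -(f 2 1) else if (2:ZMod 4) = 1 then -(f 3 0) else 0) - (if (0:ZMod 4) = 0 then -(f 2 1) else if (0:ZMod 4) = 1 then -(f 3 0) else 0)) := by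
      simp only [f01, f10, chi2]
      simp +decide
      try omega
    have e22 : f 2 2 = (f 0 1 + f 2 1) * f01 2 2 + (f 1 0 + f 3 0) * f10 2 2 + ((if (2:ZMod 4) = 0 then -(f 2 1) else if (2:ZMod 4) = 1 then -(f 3 0) else 0) - (if (2:ZMod 4) = 0 then -(f 2 1) else if (2:ZMod 4) = 1 then -(f 3 0) else 0)) := by
      simp only [f01, f10, chi2]
      simp +decide
      try omega
    have e23 : f 2 3 = (f 0 1 + f 2 1) * f01 2 3 + (f 1 0 + f 3 0) * f10 2 3 + ((if (2:ZMod 4) = 0 then -(f 2 1) else if (2:ZMod 4) = 1 then -(f 3 0) else 0) - (if (0:ZMod 4) = 0 then -(f 2 1) else if (0:ZMod 4) = 1 then -(f 3 0) else 0)) := by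
      simp only [f01, f10, chi2]
      simp +decide
      try omega
    have e30 : f 3 0 = (f 0 1 + f 2 1) * f01 3 0 + (f 1 0 + f 3 0) * f10 3 0 + ((if (3:ZMod 4) = 0 then -(f 2 1) else if (3:ZMod 4) = 1 then -(f 3 0) else 0) - (if (1:ZMod 4) = 0 then -(f 2 1) else if (1:ZMod 4) = 1 then -(f 3 0) else 0)) := by
      simp only [f01, f10, chi2]
      simp +decide
      try omega
    have e31 : f 3 1 = (f 0 1 + f 2 1) * f01 3 1 + (f 1 0 + f 3 0) * f10 3 1 + ((if (3:ZMod 4) = 0 then -(f 2 1) else if (3:ZMod 4) = 1 then -(f 3 0) else 0) - (if (3:ZMod 4) = 0 then -(f 2 1) else if (3:ZMod 4) = 1 then -(f 3 0) else 0)) := by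
      simp only [f01, f10, chi2]
      simp +decide
      try omega
    have e32 : f 3 2 = (f 0 1 + f 2 1) * f01 3 2 + (f 1 0 + f 3 0) * f10 3 2 + ((if (3:ZMod 4) = 0 then -(f 2 1) else if (3:ZMod 4) = 1 then -(f 3 0) else 0) - (if (1:ZMod 4) = 0 then -(f 2 1) else if (1:ZMod 4) = 1 then -(f 3 0) else 0)) := by
      simp only [f01, f10, chi2]
      simp +decide
      try omega
    have e33 : f 3 3 = (f 0 1 + f 2 1) * f01 3 3 + (f 1 0 + f 3 0) * f10 3 3 + ((if (3:ZMod 4) = 0 then -(f 2 1) else if (3:ZMod 4) = 1 then -(f 3 0) else 0) - (if (3:ZMod 4) = 0 then -(f 2 1) else if (3:ZMod 4) = 1 then -(f 3 0) else 0)) := by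
      simp only [f01, f10, chi2]
      simp +decide
      try omega
    refine ⟨f 0 1 + f 2 1, f 1 0 + f 3 0,
      (fun x => if x = 0 then -(f 2 1) else if x = 1 then -(f 3 0) else 0), ?_⟩
    intro x y
    fin_cases x <;> fin_cases y
    · exact e00
    · exact e01
    · exact e02
    · exact e03
    · exact e10
    · exact e11
    · exact e12
    · exact e13
    · exact e20
    · exact e21
    · exact e22
    · exact e23
    · exact e30
    · exact e31
    · exact e32
    · exact e33
  · intro a b ⟨g, hg⟩
    have h1 : a * f01 0 1 + b * f10 0 1 = g 0 - g 2 := hg 0 1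
    have h2 : a * f01 2 1 + b * f10 2 1 = g 2 - g 0 := hg 2 1
    have h3 : a * f01 1 0 + b * f10 1 0 = g 1 - g 3 := hg 1 0
    have h4 : a * f01 3 0 + b * f10 3 0 = g 3 - g 1 := hg 3 0
    simp only [f01, f10, chi2] at h1 h2 h3 h4
    simp +decide at h1 h2 h3 h4
    constructor <;> omega
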